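/- De-focalization (soundness of focusing): if the sequent Γ ; L ⊢ U is derivable in the focused sequent calculus for polarized intuitionistic logic (in any of the three forms), then the sequent (Γ)⊛ ; (L)⊛ ⊢ (U)⊛ is derivable in the unfocused sequent calculus G3 for intuitionistic propositional logic extended with an ordered auxiliary context Ψ, where the Ψ-sequent Γ; Ψ ⊢ Q is defined by rules cons (Γ, P; Ψ ⊢ Q implies Γ; P, Ψ ⊢ Q) and nil (Γ ⊢ Q implies Γ; · ⊢ Q). In particular, if U is stable and Γ, U are suspension-normal, Γ ; · ⊢ U implies (Γ)⊛ ⊢ (U)⊛ in G3. -/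

import Mathlib

/-
Erasure sends every focused rule either to the G3 rule for the same connective or to nothing:
shifts, η-expansions, focusing and blurring disappear, and the identity rules become instances of
the admissible identity of G3 on arbitrary propositions. Since G3 contexts are only read through
membership, they may be weakened along `⊆`; the ordered inversion context Ω is therefore simply
prepended to the erased hypotheses, and Ψ-sequents are recovered from that by weakening.
-/

namespace StructuralFocalization

/- Polarized propositional intuitionistic logic -/
mutual
inductive PProp : Type
  | atom : Nat → PProp
  | down : NProp → PProp
  | bot  : PProp
  | or   : PProp → PProp → PProp
  | top  : PProp
  | and  : PProp → PProp → PProp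
inductive NProp : Type
  | atom : Nat → NProp
  | up   : PProp → NProp
  | imp  : PProp → NProp → NProp
  | top  : NProp
  | and  : NProp → NProp → NProp
end

/- Hypotheses: negative propositions or suspended positives ⟨A⁺⟩ -/
inductive Hyp : Type
  | neg  : NProp → Hyp
  | susp : PProp → Hyp

/- Succedents: A⁺, A⁻, or suspended ⟨A⁻⟩ -/
inductive Succ : Type
  | pos  : PProp → Succ
  | neg  : NProp → Succ
  | susp : NProp → Succ

abbrev Ctx := List Hyp

def Succ.stable : Succ → Prop
  | .pos _ => True
  | .susp _ => True
  | .neg _ => False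

def Hyp.suspNormal : Hyp → Prop
  | .susp (PProp.atom _) => True
  | .susp _ => False
  | .neg _ => True

def Ctx.suspNormal (Γ : Ctx) : Prop := ∀ h ∈ Γ, h.suspNormal

def Succ.suspNormal : Succ → Prop
  | .susp (NProp.atom _) => True
  | .susp _ => False
  | _ => True

/- The focused sequent calculus (Figures 3 and 4 of "Structural focalization",
   with the generalized id⁺/id⁻ rules for arbitrary suspended propositions). -/
mutual
/-- Right focus: Γ ⊢ [A⁺] -/
inductive RFoc : Ctx → PProp → Prop
  | idP {Γ A} : Hyp.susp A ∈ Γ → RFoc Γ A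
  | downR {Γ A} : Inv Γ [] (Succ.neg A) → RFoc Γ (PProp.down A)
  | orR1 {Γ A B} : RFoc Γ A → RFoc Γ (PProp.or A B)
  | orR2 {Γ A B} : RFoc Γ B → RFoc Γ (PProp.or A B)
  | topR {Γ} : RFoc Γ PProp.top
  | andR {Γ A B} : RFoc Γ A → RFoc Γ B → RFoc Γ (PProp.and A B)
/-- Inversion: Γ ; Ω ⊢ U -/
inductive Inv : Ctx → List PProp → Succ → Prop
  | focR {Γ A} : RFoc Γ A → Inv Γ [] (Succ.pos A)
  | focL {Γ A U} : Hyp.neg A ∈ Γ → Succ.stable U → LFoc Γ A U → Inv Γ [] U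
  | etaP {Γ p Ω U} : Inv (Hyp.susp (PProp.atom p) :: Γ) Ω U → Inv Γ (PProp.atom p :: Ω) U
  | downL {Γ A Ω U} : Inv (Hyp.neg A :: Γ) Ω U → Inv Γ (PProp.down A :: Ω) U
  | botL {Γ Ω U} : Inv Γ (PProp.bot :: Ω) U
  | orL {Γ A B Ω U} : Inv Γ (A :: Ω) U → Inv Γ (B :: Ω) U → Inv Γ (PProp.or A B :: Ω) U
  | topPL {Γ Ω U} : Inv Γ Ω U → Inv Γ (PProp.top :: Ω) U
  | andPL {Γ A B Ω U} : Inv Γ (A :: B :: Ω) U → Inv Γ (PProp.and A B :: Ω) U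
  | etaN {Γ p} : Inv Γ [] (Succ.susp (NProp.atom p)) → Inv Γ [] (Succ.neg (NProp.atom p))
  | upR {Γ A} : Inv Γ [] (Succ.pos A) → Inv Γ [] (Succ.neg (NProp.up A))
  | impR {Γ A B} : Inv Γ [A] (Succ.neg B) → Inv Γ [] (Succ.neg (NProp.imp A B))
  | topNR {Γ} : Inv Γ [] (Succ.neg NProp.top)
  | andNR {Γ A B} : Inv Γ [] (Succ.neg A) → Inv Γ [] (Succ.neg B) →
      Inv Γ [] (Succ.neg (NProp.and A B))
/-- Left focus: Γ ; [A⁻] ⊢ U -/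
inductive LFoc : Ctx → NProp → Succ → Prop
  | idN {Γ A} : LFoc Γ A (Succ.susp A)
  | upL {Γ A U} : Inv Γ [A] U → LFoc Γ (NProp.up A) U
  | impL {Γ A B U} : RFoc Γ A → LFoc Γ B U → LFoc Γ (NProp.imp A B) U
  | andL1 {Γ A B U} : LFoc Γ A U → LFoc Γ (NProp.and A B) U
  | andL2 {Γ A B U} : LFoc Γ B U → LFoc Γ (NProp.and A B) U
end

/- Unpolarized propositions and Kleene's G3 -/
inductive UProp : Type
  | atom : Nat → UProp
  | bot  : UProp
  | or   : UProp → UProp → UProp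
  | top  : UProp
  | and  : UProp → UProp → UProp
  | imp  : UProp → UProp → UProp

inductive G3 : List UProp → UProp → Prop
  | init {Γ p} : UProp.atom p ∈ Γ → G3 Γ (UProp.atom p)
  | botL {Γ Q} : UProp.bot ∈ Γ → G3 Γ Q
  | orR1 {Γ A B} : G3 Γ A → G3 Γ (UProp.or A B)
  | orR2 {Γ A B} : G3 Γ B → G3 Γ (UProp.or A B)
  | orL {Γ A B Q} : UProp.or A B ∈ Γ → G3 (A :: Γ) Q → G3 (B :: Γ) Q → G3 Γ Q
  | topR {Γ} : G3 Γ UProp.top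
  | andR {Γ A B} : G3 Γ A → G3 Γ B → G3 Γ (UProp.and A B)
  | andL1 {Γ A B Q} : UProp.and A B ∈ Γ → G3 (A :: Γ) Q → G3 Γ Q
  | andL2 {Γ A B Q} : UProp.and A B ∈ Γ → G3 (B :: Γ) Q → G3 Γ Q
  | impR {Γ A B} : G3 (A :: Γ) B → G3 Γ (UProp.imp A B)
  | impL {Γ A B Q} : UProp.imp A B ∈ Γ → G3 Γ A → G3 (B :: Γ) Q → G3 Γ Q

/-- G3 with an ordered auxiliary context Ψ: Γ; Ψ ⊢ Q -/
inductive G3Psi : List UProp → List UProp → UProp → Prop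
  | cons {Γ P Ψ Q} : G3Psi (P :: Γ) Ψ Q → G3Psi Γ (P :: Ψ) Q
  | nil {Γ Q} : G3 Γ Q → G3Psi Γ [] Q

/- Erasure -/
mutual
def eraseP : PProp → UProp
  | .atom p => .atom p
  | .down A => eraseN A
  | .bot => .bot
  | .or A B => .or (eraseP A) (eraseP B)
  | .top => .top
  | .and A B => .and (eraseP A) (eraseP B)
def eraseN : NProp → UProp
  | .atom p => .atom p
  | .up A => eraseP A
  | .imp A B => .imp (eraseP A) (eraseN B)
  | .top => .top
  | .and A B => .and (eraseN A) (eraseN B)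
end

def eraseHyp : Hyp → UProp
  | .neg A => eraseN A
  | .susp A => eraseP A

def eraseCtx (Γ : Ctx) : List UProp := Γ.map eraseHyp

def eraseSucc : Succ → UProp
  | .pos A => eraseP A
  | .neg A => eraseN A
  | .susp A => eraseN A

theorem G3.mono {Γ : List UProp} {Q : UProp} (h : G3 Γ Q) {Δ : List UProp} (hΓ : Γ ⊆ Δ) :
    G3 Δ Q := by
  induction h generalizing Δ with
  | init hp => exact .init (hΓ hp)
  | botL hb => exact .botL (hΓ hb)
  | orR1 _ ih => exact .orR1 (ih hΓ)
  | orR2 _ ih => exact .orR2 (ih hΓ)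
  | orL hm _ _ ih₁ ih₂ =>
    exact .orL (hΓ hm) (ih₁ (List.cons_subset_cons _ hΓ)) (ih₂ (List.cons_subset_cons _ hΓ))
  | topR => exact .topR
  | andR _ _ ih₁ ih₂ => exact .andR (ih₁ hΓ) (ih₂ hΓ)
  | andL1 hm _ ih => exact .andL1 (hΓ hm) (ih (List.cons_subset_cons _ hΓ))
  | andL2 hm _ ih => exact .andL2 (hΓ hm) (ih (List.cons_subset_cons _ hΓ))
  | impR _ ih => exact .impR (ih (List.cons_subset_cons _ hΓ))
  | impL hm _ _ ih₁ ih₂ => exact .impL (hΓ hm) (ih₁ hΓ) (ih₂ (List.cons_subset_cons _ hΓ))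

theorem G3.of_cons_of_mem {Γ : List UProp} {A Q : UProp} (hA : A ∈ Γ) (h : G3 (A :: Γ) Q) :
    G3 Γ Q :=
  h.mono (List.cons_subset.2 ⟨hA, List.Subset.refl Γ⟩)

theorem G3.weaken_cons {Γ : List UProp} {A B Q : UProp} (h : G3 (A :: Γ) Q) :
    G3 (A :: B :: Γ) Q :=
  h.mono (List.cons_subset_cons _ (List.subset_cons_self B Γ))

theorem G3.of_mem {Γ : List UProp} : ∀ {A : UProp}, A ∈ Γ → G3 Γ A
  | .atom _, hA => .init hA
  | .bot, hA => .botL hA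
  | .or _ _, hA => .orL hA (.orR1 (of_mem List.mem_cons_self)) (.orR2 (of_mem List.mem_cons_self))
  | .top, _ => .topR
  | .and _ _, hA => .andR (.andL1 hA (of_mem List.mem_cons_self))
      (.andL2 hA (of_mem List.mem_cons_self))
  | .imp _ _, hA => .impR (.impL (List.mem_cons_of_mem _ hA) (of_mem List.mem_cons_self)
      (of_mem List.mem_cons_self))

theorem G3Psi.of_G3_append {Γ : List UProp} {Ψ : List UProp} {Q : UProp} (h : G3 (Ψ ++ Γ) Q) :
    G3Psi Γ Ψ Q := by
  induction Ψ generalizing Γ with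
  | nil => exact .nil h
  | cons P Ψ ih => exact .cons (ih (h.mono List.perm_middle.symm.subset))

mutual

theorem RFoc.erase {Γ : Ctx} {A : PProp} : RFoc Γ A → G3 (eraseCtx Γ) (eraseP A)
  | .idP hA => .of_mem (List.mem_map_of_mem (f := eraseHyp) hA)
  | .downR h => h.erase
  | .orR1 h => .orR1 h.erase
  | .orR2 h => .orR2 h.erase
  | .topR => .topR
  | .andR h₁ h₂ => .andR h₁.erase h₂.erase

theorem Inv.erase {Γ : Ctx} {Ω : List PProp} {U : Succ} :
    Inv Γ Ω U → G3 (Ω.map eraseP ++ eraseCtx Γ) (eraseSucc U)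
  | .focR h => h.erase
  | .focL hA _ h => .of_cons_of_mem (List.mem_map_of_mem (f := eraseHyp) hA) h.erase
  | .etaP h => h.erase.mono List.perm_middle.subset
  | .downL h => h.erase.mono List.perm_middle.subset
  | .botL => .botL List.mem_cons_self
  | .orL h₁ h₂ => .orL List.mem_cons_self h₁.erase.weaken_cons h₂.erase.weaken_cons
  | .topPL h => h.erase.mono (List.subset_cons_self _ _)
  | .andPL h => .andL2 List.mem_cons_self (.andL1 (List.mem_cons_of_mem _ List.mem_cons_self)
      (h.erase.mono (List.cons_subset_cons _ (List.cons_subset_cons _ (List.subset_cons_self _ _)))))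
  | .etaN h => h.erase
  | .upR h => h.erase
  | .impR h => .impR h.erase
  | .topNR => .topR
  | .andNR h₁ h₂ => .andR h₁.erase h₂.erase

theorem LFoc.erase {Γ : Ctx} {A : NProp} {U : Succ} :
    LFoc Γ A U → G3 (eraseN A :: eraseCtx Γ) (eraseSucc U)
  | .idN => .of_mem List.mem_cons_self
  | .upL h => h.erase
  | .impL h₁ h₂ => .impL List.mem_cons_self (h₁.erase.mono (List.subset_cons_self _ _))
      h₂.erase.weaken_cons
  | .andL1 h => .andL1 List.mem_cons_self h.erase.weaken_cons
  | .andL2 h => .andL2 List.mem_cons_self h.erase.weaken_cons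

end

/-- De-focalization (soundness of focusing), in all three sequent forms,
    together with the "in particular" statement for stable sequents. -/
theorem defocalization :
    (∀ (Γ : Ctx) (A : PProp), Ctx.suspNormal Γ →
      RFoc Γ A → G3Psi (eraseCtx Γ) [] (eraseP A)) ∧
    (∀ (Γ : Ctx) (Ω : List PProp) (U : Succ),
      Ctx.suspNormal Γ → Succ.suspNormal U →
      Inv Γ Ω U → G3Psi (eraseCtx Γ) (Ω.map eraseP) (eraseSucc U)) ∧
    (∀ (Γ : Ctx) (A : NProp) (U : Succ),
      Ctx.suspNormal Γ → Succ.suspNormal U →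
      LFoc Γ A U → G3Psi (eraseCtx Γ) [eraseN A] (eraseSucc U)) ∧
    (∀ (Γ : Ctx) (U : Succ), Succ.stable U →
      Ctx.suspNormal Γ → Succ.suspNormal U →
      Inv Γ [] U → G3 (eraseCtx Γ) (eraseSucc U)) :=
  ⟨fun _ _ _ h => .nil h.erase,
   fun _ _ _ _ _ h => .of_G3_append h.erase,
   fun _ _ _ _ _ h => .of_G3_append h.erase,
   fun _ _ _ _ _ h => h.erase⟩

end StructuralFocalization
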